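/- Let ε ∈ (0,1/2), let f : {-1,1}^n → {-1,1} be a Boolean function, and let p : {-1,1}^n → ℝ be a flat multilinear polynomial with exactly T ≥ 1 nonzero Fourier coefficients, all of the same absolute value, such that |p(x) − f(x)| ≤ ε for every x ∈ {-1,1}^n. Then the Fourier entropy of f satisfies H(f̂²) ≥ (1 − 4ε²)·log₂( T / (4(1+ε)²) ). -/

import Mathlib

open Finset

/-- The real value (`1` or `-1`) encoded by a Boolean. -/
noncomputable def bsgn (b : Bool) : ℝ := if b then 1 else -1

/-- The character `χ_S(x) = ∏_{i ∈ S} x_i` on the hypercube `{-1,1}^n`. -/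
noncomputable def chi {n : ℕ} (S : Finset (Fin n)) (x : Fin n → Bool) : ℝ :=
  ∏ i ∈ S, bsgn (x i)

/-- The Fourier coefficient `f̂(S) = E_x [f(x)·χ_S(x)]`. -/
noncomputable def fCoeff {n : ℕ} (f : (Fin n → Bool) → ℝ) (S : Finset (Fin n)) : ℝ :=
  (∑ x : Fin n → Bool, f x * chi S x) / 2 ^ n

/-- The Fourier (Shannon) entropy `H(f̂²) = Σ_S f̂(S)² log₂(1/f̂(S)²)`. -/
noncomputable def fEntropy {n : ℕ} (f : (Fin n → Bool) → ℝ) : ℝ :=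
  ∑ S : Finset (Fin n), (fCoeff f S) ^ 2 * Real.logb 2 (1 / (fCoeff f S) ^ 2)

/-- The Fourier min-entropy `H_∞(f̂²) = min_{S : f̂(S) ≠ 0} log₂(1/f̂(S)²)`. -/
noncomputable def fMinEntropy {n : ℕ} (f : (Fin n → Bool) → ℝ) : ℝ :=
  sInf {y : ℝ | ∃ S : Finset (Fin n),
    fCoeff f S ≠ 0 ∧ y = Real.logb 2 (1 / (fCoeff f S) ^ 2)}

/-- The total influence `Inf(f) = Σ_S |S|·f̂(S)²`. -/
noncomputable def totalInf {n : ℕ} (f : (Fin n → Bool) → ℝ) : ℝ :=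
  ∑ S : Finset (Fin n), (S.card : ℝ) * (fCoeff f S) ^ 2

/-- `f` is a Boolean (`±1`-valued) function. -/
def IsBooleanFunc {n : ℕ} (f : (Fin n → Bool) → ℝ) : Prop := ∀ x, f x = 1 ∨ f x = -1

/-!
Write `t = 4(1+ε)²/T`. Flatness and Parseval for `p` give `T·p̂(S)² ≤ ‖p‖₂² ≤ (1+ε)²`,
so `4·p̂(S)² ≤ t` for every `S`. A coefficient with `f̂(S)² ≥ t` is therefore at least
twice `|p̂(S)|`, whence `f̂(S)² ≤ 4(f̂(S) − p̂(S))²`; by Parseval for `f − p` these heavy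
coefficients carry Fourier mass at most `4ε²`. The remaining mass, at least `1 − 4ε²`,
sits on coefficients with `log₂(1/f̂(S)²) > log₂(1/t)`.
-/

section FiniteSums

variable {ι : Type*} [Fintype ι]

theorem mul_logb_one_div_nonneg {a : ℝ} (ha₀ : 0 ≤ a) (ha₁ : a ≤ 1) :
    0 ≤ a * Real.logb 2 (1 / a) := by
  rcases ha₀.eq_or_lt with rfl | ha
  · simp
  · exact mul_nonneg ha.le (Real.logb_nonneg one_lt_two (by rwa [le_div_iff₀ ha, one_mul]))

theorem mul_logb_one_div_nonneg_of_sum_eq_one {a : ι → ℝ} (ha : ∀ i, 0 ≤ a i)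
    (hsum : ∑ i, a i = 1) (i : ι) : 0 ≤ a i * Real.logb 2 (1 / a i) :=
  mul_logb_one_div_nonneg (ha i) (hsum ▸ single_le_sum (fun j _ => ha j) (mem_univ i))

theorem sum_mul_logb_one_div_nonneg {a : ι → ℝ} (ha : ∀ i, 0 ≤ a i) (hsum : ∑ i, a i = 1) :
    0 ≤ ∑ i, a i * Real.logb 2 (1 / a i) :=
  sum_nonneg fun i _ => mul_logb_one_div_nonneg_of_sum_eq_one ha hsum i

theorem le_sum_mul_logb_one_div_of_heavy_le {a : ι → ℝ} (ha : ∀ i, 0 ≤ a i)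
    (hsum : ∑ i, a i = 1) {t δ : ℝ} (ht₀ : 0 < t) (ht₁ : t ≤ 1)
    (hheavy : ∑ i ∈ univ.filter (fun i => t ≤ a i), a i ≤ δ) :
    (1 - δ) * Real.logb 2 (1 / t) ≤ ∑ i, a i * Real.logb 2 (1 / a i) := by
  set light := univ.filter (fun i => ¬ t ≤ a i)
  have hlight : 1 - δ ≤ ∑ i ∈ light, a i := by
    rw [← hsum, ← sum_filter_add_sum_filter_not univ (fun i => t ≤ a i)]
    linarith
  have hL : 0 ≤ Real.logb 2 (1 / t) :=
    Real.logb_nonneg one_lt_two (by rwa [le_div_iff₀ ht₀, one_mul])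
  calc (1 - δ) * Real.logb 2 (1 / t)
      ≤ ∑ i ∈ light, a i * Real.logb 2 (1 / t) := by
        rw [← sum_mul]; exact mul_le_mul_of_nonneg_right hlight hL
    _ ≤ ∑ i ∈ light, a i * Real.logb 2 (1 / a i) := by
        refine sum_le_sum fun i hi => ?_
        have hat : a i < t := not_le.mp (mem_filter.mp hi).2
        rcases (ha i).eq_or_lt with h | h
        · simp [← h]
        · exact mul_le_mul_of_nonneg_left (Real.logb_le_logb_of_le one_lt_two (by positivity)
            (one_div_le_one_div_of_le h hat.le)) h.le
    _ ≤ ∑ i, a i * Real.logb 2 (1 / a i) :=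
        sum_le_sum_of_subset_of_nonneg (subset_univ _) fun i _ _ =>
          mul_logb_one_div_nonneg_of_sum_eq_one ha hsum i

theorem sq_le_four_mul_sq_sub_of_four_mul_sq_le {x y : ℝ} (h : 4 * y ^ 2 ≤ x ^ 2) :
    x ^ 2 ≤ 4 * (x - y) ^ 2 := by
  nlinarith [sq_nonneg (x - 2 * y)]

theorem sum_filter_sq_le_four_mul_sum_sq_sub {a b : ι → ℝ} {t : ℝ}
    (hb : ∀ i, 4 * b i ^ 2 ≤ t) :
    ∑ i ∈ univ.filter (fun i => t ≤ a i ^ 2), a i ^ 2 ≤ 4 * ∑ i, (a i - b i) ^ 2 := by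
  rw [mul_sum]
  calc ∑ i ∈ univ.filter (fun i => t ≤ a i ^ 2), a i ^ 2
      ≤ ∑ i ∈ univ.filter (fun i => t ≤ a i ^ 2), 4 * (a i - b i) ^ 2 :=
        sum_le_sum fun i hi =>
          sq_le_four_mul_sq_sub_of_four_mul_sq_le ((hb i).trans (mem_filter.mp hi).2)
    _ ≤ ∑ i, 4 * (a i - b i) ^ 2 :=
        sum_le_sum_of_subset_of_nonneg (subset_univ _) fun i _ _ => by positivity

theorem card_filter_ne_zero_mul_sq_le_sum_sq {c : ι → ℝ}
    (hflat : ∀ i j, c i ≠ 0 → c j ≠ 0 → |c i| = |c j|) (i : ι) :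
    (#(univ.filter (fun j => c j ≠ 0)) : ℝ) * c i ^ 2 ≤ ∑ j, c j ^ 2 := by
  by_cases hi : c i = 0
  · rw [hi]; simpa using sum_nonneg fun j _ => sq_nonneg (c j)
  calc (#(univ.filter (fun j => c j ≠ 0)) : ℝ) * c i ^ 2
      = ∑ j ∈ univ.filter (fun j => c j ≠ 0), c j ^ 2 := by
        rw [← nsmul_eq_mul, ← sum_const]
        exact sum_congr rfl fun j hj => by
          rw [← sq_abs, hflat i j hi (mem_filter.mp hj).2, sq_abs]
    _ ≤ ∑ j, c j ^ 2 := sum_le_sum_of_subset_of_nonneg (subset_univ _) fun j _ _ => sq_nonneg _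

end FiniteSums

section Fourier

variable {n : ℕ}

theorem bsgn_mul_self (b : Bool) : bsgn b * bsgn b = 1 := by cases b <;> simp [bsgn]

theorem sum_chi_mul_chi (x y : Fin n → Bool) :
    ∑ S : Finset (Fin n), chi S x * chi S y = if x = y then (2 : ℝ) ^ n else 0 := by
  have hprod : ∑ S : Finset (Fin n), chi S x * chi S y
      = ∏ i : Fin n, (bsgn (x i) * bsgn (y i) + 1) := by
    rw [prod_add_one, powerset_univ]
    exact sum_congr rfl fun S _ => by rw [chi, chi, ← prod_mul_distrib]
  rw [hprod]
  split_ifs with hxy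
  · subst hxy
    simp [bsgn_mul_self, one_add_one_eq_two]
  · obtain ⟨i, hi⟩ : ∃ i, x i ≠ y i := Function.ne_iff.mp hxy
    refine prod_eq_zero (mem_univ i) ?_
    revert hi
    cases x i <;> cases y i <;> simp [bsgn]

theorem sum_fCoeff_sq (g : (Fin n → Bool) → ℝ) :
    ∑ S : Finset (Fin n), fCoeff g S ^ 2 = (∑ x, g x ^ 2) / 2 ^ n := by
  have key : ∑ S : Finset (Fin n), (∑ x, g x * chi S x) ^ 2 = (∑ x, g x ^ 2) * 2 ^ n := by
    calc ∑ S : Finset (Fin n), (∑ x, g x * chi S x) ^ 2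
        = ∑ x, ∑ y, g x * g y * ∑ S : Finset (Fin n), chi S x * chi S y := by
          simp_rw [sq, sum_mul_sum, mul_sum]
          rw [sum_comm]
          refine sum_congr rfl fun x _ => ?_
          rw [sum_comm]
          exact sum_congr rfl fun y _ => sum_congr rfl fun S _ => by ring
      _ = (∑ x, g x ^ 2) * 2 ^ n := by
          simp_rw [sum_chi_mul_chi, mul_ite, mul_zero, sum_ite_eq, mem_univ, if_true, sum_mul,
            sq]
  simp only [fCoeff, div_pow]
  rw [← sum_div, key]
  field_simp

theorem fCoeff_sub (f g : (Fin n → Bool) → ℝ) (S : Finset (Fin n)) :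
    fCoeff (fun x => f x - g x) S = fCoeff f S - fCoeff g S := by
  simp only [fCoeff, sub_mul, sum_sub_distrib, sub_div]

theorem sum_fCoeff_sq_le_of_abs_le {g : (Fin n → Bool) → ℝ} {c : ℝ} (hg : ∀ x, |g x| ≤ c) :
    ∑ S : Finset (Fin n), fCoeff g S ^ 2 ≤ c ^ 2 := by
  rw [sum_fCoeff_sq, div_le_iff₀ (by positivity)]
  calc ∑ x, g x ^ 2 ≤ ∑ _x : Fin n → Bool, c ^ 2 :=
        sum_le_sum fun x _ => sq_le_sq' (abs_le.mp (hg x)).1 (abs_le.mp (hg x)).2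
    _ = c ^ 2 * 2 ^ n := by simp [mul_comm]

theorem IsBooleanFunc.sum_fCoeff_sq {f : (Fin n → Bool) → ℝ} (hf : IsBooleanFunc f) :
    ∑ S : Finset (Fin n), fCoeff f S ^ 2 = 1 := by
  have hf2 : ∀ x, f x ^ 2 = 1 := fun x => by rcases hf x with h | h <;> simp [h]
  simp [_root_.sum_fCoeff_sq, hf2]

theorem IsBooleanFunc.abs_eq_one {f : (Fin n → Bool) → ℝ} (hf : IsBooleanFunc f)
    (x : Fin n → Bool) : |f x| = 1 := by
  rcases hf x with h | h <;> simp [h]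

end Fourier

theorem stmt14_general {n : ℕ} (ε : ℝ) (hε1 : ε < 1 / 2)
    (f p : (Fin n → Bool) → ℝ) (hf : IsBooleanFunc f)
    (T : ℕ)
    (hTcard : T = (Finset.univ.filter (fun S : Finset (Fin n) => fCoeff p S ≠ 0)).card)
    (hflat : ∀ S S' : Finset (Fin n), fCoeff p S ≠ 0 → fCoeff p S' ≠ 0 →
      |fCoeff p S| = |fCoeff p S'|)
    (happrox : ∀ x, |p x - f x| ≤ ε) :
    (1 - 4 * ε ^ 2) * Real.logb 2 ((T : ℝ) / (4 * (1 + ε) ^ 2)) ≤ fEntropy f := by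
  have hε0 : 0 ≤ ε := (abs_nonneg _).trans (happrox fun _ => false)
  obtain hsmall | hlarge := lt_or_ge ((T : ℝ) / (4 * (1 + ε) ^ 2)) 1
  · exact (mul_nonpos_of_nonneg_of_nonpos (by nlinarith)
      (Real.logb_nonpos one_lt_two (by positivity) hsmall.le)).trans
      (sum_mul_logb_one_div_nonneg (fun S => sq_nonneg _) hf.sum_fCoeff_sq)
  have hT : (0 : ℝ) < T :=
    Nat.cast_pos.mpr (Nat.pos_of_ne_zero fun h => by norm_num [h] at hlarge)
  have hp : ∀ x, |p x| ≤ 1 + ε := fun x => by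
    simpa [hf.abs_eq_one x, add_comm] using
      (abs_sub_abs_le_abs_sub (p x) (f x)).trans (happrox x)
  have hpS : ∀ S, 4 * fCoeff p S ^ 2 ≤ 4 * (1 + ε) ^ 2 / T := fun S => by
    have hflatS :=
      (card_filter_ne_zero_mul_sq_le_sum_sq hflat S).trans (sum_fCoeff_sq_le_of_abs_le hp)
    rw [← hTcard] at hflatS
    rw [le_div_iff₀ hT]
    linarith
  have hdiff : ∑ S, (fCoeff f S - fCoeff p S) ^ 2 ≤ ε ^ 2 := by
    simpa only [fCoeff_sub] using sum_fCoeff_sq_le_of_abs_le (g := fun x => f x - p x)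
      fun x => abs_sub_comm (f x) _ ▸ happrox x
  rw [← one_div_div]
  refine le_sum_mul_logb_one_div_of_heavy_le (fun S => sq_nonneg _) hf.sum_fCoeff_sq
    (by positivity) ((div_le_one (by positivity)).mpr ?_) ?_
  · rwa [one_le_div (by positivity)] at hlarge
  · linarith [sum_filter_sq_le_four_mul_sum_sq_sub (a := fCoeff f) hpS]

/-- Let `ε ∈ (0,1/2)`, let `f` be Boolean and let `p` be a flat
multilinear polynomial (all nonzero Fourier coefficients of the same absolute value)
with exactly `T ≥ 1` nonzero Fourier coefficients such that `|p(x) − f(x)| ≤ ε` on the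
whole hypercube.  Then `H(f̂²) ≥ (1 − 4ε²)·log₂( T / (4(1+ε)²) )`. -/
theorem stmt14 {n : ℕ} (ε : ℝ) (hε0 : 0 < ε) (hε1 : ε < 1 / 2)
    (f p : (Fin n → Bool) → ℝ) (hf : IsBooleanFunc f)
    (T : ℕ) (hT1 : 1 ≤ T)
    (hTcard : T = (Finset.univ.filter (fun S : Finset (Fin n) => fCoeff p S ≠ 0)).card)
    (hflat : ∀ S S' : Finset (Fin n), fCoeff p S ≠ 0 → fCoeff p S' ≠ 0 →
      |fCoeff p S| = |fCoeff p S'|)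
    (happrox : ∀ x, |p x - f x| ≤ ε) :
    (1 - 4 * ε ^ 2) * Real.logb 2 ((T : ℝ) / (4 * (1 + ε) ^ 2)) ≤ fEntropy f :=
  stmt14_general ε hε1 f p hf T hTcard hflat happrox
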